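/- For integers m ≥ 1, n ≥ 0, sequences of nonnegative integers a_i and c_i, and rationals x_i, the sum over all tuples (k_1,...,k_m) with ∑ k_i = n of [∏_{i=1}^m C(a_i,k_i)C(k_i,c_i)] * (∑_{i=1}^m x_i k_i)^2, multiplied by (A_0-C_0)(A_0-C_0-1), equals C(A_0-C_0, n-C_0) * [∏ C(a_i,c_i)] * { (n-C_0)[(n-C_0-1)A_1^2 + (A_0-n)(A_2 - C_2 + 2 A_1 C_1)] + (A_0-n)(A_0-n-1) C_1^2 }. -/

import Mathlib

open Finset

/-- Binomial coefficient with integer arguments, zero when `k < 0` or `k > n`. -/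
def ch (n k : ℤ) : ℚ := if 0 ≤ k ∧ k ≤ n then (n.toNat.choose k.toNat : ℚ) else 0

lemma ch_neg {n k : ℤ} (h : k < 0) : ch n k = 0 := by simp [ch]; omega

lemma ch_gt {n k : ℤ} (h : n < k) : ch n k = 0 := by simp [ch]; omega

lemma ch_natCast (n k : ℕ) : ch n k = (n.choose k : ℚ) := by
  by_cases h : k ≤ n
  · simp [ch, h]
  · rw [ch_gt (by exact_mod_cast by omega), Nat.choose_eq_zero_of_lt (by omega)]
    simp

lemma absorb (b k : ℤ) : (k : ℚ) * ch b k = (b : ℚ) * ch (b-1) (k-1) := by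
  rcases lt_trichotomy k 0 with h | h | h
  · rw [ch_neg h, ch_neg (by omega)]; ring
  · subst h; rw [ch_neg (by norm_num : (0:ℤ)-1 < 0)]; ring
  · by_cases hb : k ≤ b
    · have hb0 : 0 ≤ b := by omega
      obtain ⟨n, rfl⟩ := Int.eq_ofNat_of_zero_le hb0
      obtain ⟨m, rfl⟩ := Int.eq_ofNat_of_zero_le (le_of_lt h)
      obtain ⟨n', rfl⟩ : ∃ n', n = n' + 1 := ⟨n - 1, by omega⟩
      obtain ⟨m', rfl⟩ : ∃ m', m = m' + 1 := ⟨m - 1, by omega⟩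
      have h1 : ((n' + 1 : ℕ) : ℤ) - 1 = (n' : ℕ) := by push_cast; ring
      have h2 : ((m' + 1 : ℕ) : ℤ) - 1 = (m' : ℕ) := by push_cast; ring
      rw [h1, h2, ch_natCast, ch_natCast]
      have h3 : ((n' + 1) * Nat.choose n' m' : ℚ) = ((n' + 1).choose (m' + 1) * (m' + 1) : ℚ) := by
        exact_mod_cast congrArg (Nat.cast : ℕ → ℚ) (Nat.add_one_mul_choose_eq n' m')
      push_cast
      linear_combination -h3
    · rw [ch_gt (by omega), ch_gt (by omega)]; ring

lemma sum_shift (f : ℤ → ℤ → ℚ) (h1 : ∀ j k : ℤ, j < 0 ∨ k < 0 → f j k = 0)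
    (s t M : ℕ) :
    ∑ pq ∈ Finset.HasAntidiagonal.antidiagonal (M + s + t), f ((pq.1 : ℤ) - s) ((pq.2 : ℤ) - t)
      = ∑ pq ∈ Finset.HasAntidiagonal.antidiagonal M, f pq.1 pq.2 := by
  classical
  set e : ℕ × ℕ ↪ ℕ × ℕ :=
    ⟨fun pq => (pq.1 + s, pq.2 + t), by
      intro p q h; simp only [Prod.ext_iff] at h; exact Prod.ext (by omega) (by omega)⟩ with he
  have hsub : (Finset.HasAntidiagonal.antidiagonal M).map e ⊆ Finset.HasAntidiagonal.antidiagonal (M + s + t) := by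
    intro pq hpq
    simp only [Finset.mem_map, Finset.HasAntidiagonal.mem_antidiagonal, he, Function.Embedding.coeFn_mk] at hpq ⊢
    obtain ⟨ab, hab, rfl⟩ := hpq
    show ab.1 + s + (ab.2 + t) = M + s + t
    omega
  rw [← Finset.sum_subset hsub]
  · rw [Finset.sum_map]
    apply Finset.sum_congr rfl
    intro pq _
    simp only [he, Function.Embedding.coeFn_mk]
    show f (((pq.1 + s : ℕ) : ℤ) - s) (((pq.2 + t : ℕ) : ℤ) - t) = f pq.1 pq.2
    congr 1 <;> push_cast <;> ring
  · intro pq hpq hnot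
    simp only [Finset.mem_map, Finset.HasAntidiagonal.mem_antidiagonal, he, Function.Embedding.coeFn_mk] at hpq hnot
    apply h1
    by_contra hcon
    push_neg at hcon
    refine hnot ⟨(pq.1 - s, pq.2 - t), by omega, ?_⟩
    have h1' : s ≤ pq.1 := by omega
    have h2' : t ≤ pq.2 := by omega
    exact Prod.ext (by show pq.1 - s + s = pq.1; omega) (by show pq.2 - t + t = pq.2; omega)

lemma sum_shift_zero (f : ℤ → ℤ → ℚ) (h1 : ∀ j k : ℤ, j < 0 ∨ k < 0 → f j k = 0)
    (s t N : ℕ) (hN : N < s + t) :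
    ∑ pq ∈ Finset.HasAntidiagonal.antidiagonal N, f ((pq.1 : ℤ) - s) ((pq.2 : ℤ) - t) = 0 := by
  apply Finset.sum_eq_zero
  intro pq hpq
  simp only [Finset.HasAntidiagonal.mem_antidiagonal] at hpq
  apply h1
  omega

lemma SV (u v s t N : ℕ) :
    ∑ pq ∈ Finset.HasAntidiagonal.antidiagonal N, ch u ((pq.1 : ℤ) - s) * ch v ((pq.2 : ℤ) - t)
      = ch (u + v : ℕ) ((N : ℤ) - s - t) := by
  have hvan : ∀ j k : ℤ, j < 0 ∨ k < 0 → ch u j * ch v k = 0 := by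
    rintro j k (h | h)
    · rw [ch_neg h]; ring
    · rw [ch_neg h]; ring
  by_cases h : s + t ≤ N
  · obtain ⟨M, rfl⟩ : ∃ M, N = M + s + t := ⟨N - s - t, by omega⟩
    rw [sum_shift _ hvan]
    have h2 : ((M + s + t : ℕ) : ℤ) - s - t = ((M : ℕ) : ℤ) := by push_cast; ring
    rw [h2, ch_natCast, Nat.add_choose_eq]
    push_cast
    apply Finset.sum_congr rfl
    intro pq _
    rw [ch_natCast, ch_natCast]
  · rw [sum_shift_zero _ hvan _ _ _ (by omega), ch_neg (by push_cast; omega)]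

lemma Va (b C N : ℕ) :
    ∑ pq ∈ Finset.HasAntidiagonal.antidiagonal N, ch b pq.1 * ch C pq.2 = ch (b + C : ℕ) N := by
  have := SV b C 0 0 N
  simpa using this

lemma Vb (b C N : ℕ) :
    ∑ pq ∈ Finset.HasAntidiagonal.antidiagonal N, (pq.1 : ℚ) * ch b pq.1 * ch C pq.2
      = (b : ℚ) * ch ((b : ℤ) + C - 1) ((N : ℤ) - 1) := by
  rcases b with _ | b'
  · rw [Finset.sum_eq_zero]
    · simp
    · intro pq _
      rcases Nat.eq_zero_or_pos pq.1 with h | h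
      · rw [h]; simp
      · rw [ch_gt (by exact_mod_cast h)]; ring
  · have hSV := SV b' C 1 0 N
    push_cast at hSV
    simp only [sub_zero] at hSV
    calc ∑ pq ∈ Finset.HasAntidiagonal.antidiagonal N, (pq.1 : ℚ) * ch (b' + 1 : ℕ) pq.1 * ch C pq.2
        = ((b' + 1 : ℕ) : ℚ) * ∑ pq ∈ Finset.HasAntidiagonal.antidiagonal N, ch b' ((pq.1 : ℤ) - 1) * ch C (pq.2 : ℤ) := by
          rw [Finset.mul_sum]
          apply Finset.sum_congr rfl
          intro pq _
          have habs := absorb ((b' + 1 : ℕ) : ℤ) pq.1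
          rw [show ((b' + 1 : ℕ) : ℤ) - 1 = ((b' : ℕ) : ℤ) by push_cast; ring] at habs
          push_cast at habs ⊢
          linear_combination habs * ch (C : ℤ) (pq.2 : ℤ)
      _ = ((b' + 1 : ℕ) : ℚ) * ch (((b' + 1 : ℕ) : ℤ) + C - 1) ((N : ℤ) - 1) := by
          rw [show (((b' + 1 : ℕ) : ℤ) + C - 1) = ((b' : ℕ) : ℤ) + C by push_cast; ring, hSV]

lemma Vc2 (b C N : ℕ) :
    ∑ pq ∈ Finset.HasAntidiagonal.antidiagonal N, (pq.1 : ℚ) * ((pq.1 : ℚ) - 1) * ch b pq.1 * ch C pq.2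
      = (b : ℚ) * ((b : ℚ) - 1) * ch ((b : ℤ) + C - 2) ((N : ℤ) - 2) := by
  by_cases hb : b ≤ 1
  · rw [Finset.sum_eq_zero, show ((b:ℚ) * ((b:ℚ)-1)) = 0 by interval_cases b <;> norm_num]
    · ring
    · intro pq _
      by_cases h : pq.1 ≤ b
      · interval_cases b <;> interval_cases h' : pq.1 <;> norm_num
      · rw [ch_gt (by exact_mod_cast by omega)]; ring
  · obtain ⟨b', rfl⟩ : ∃ b', b = b' + 2 := ⟨b - 2, by omega⟩
    have hSV := SV b' C 2 0 N
    push_cast at hSV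
    simp only [sub_zero] at hSV
    have habs : ∀ p : ℕ, (p : ℚ) * ((p : ℚ) - 1) * ch (b' + 2 : ℕ) p
        = ((b' + 2 : ℕ) : ℚ) * (((b' + 2 : ℕ) : ℚ) - 1) * ch b' ((p : ℤ) - 2) := by
      intro p
      have h1 := absorb ((b' + 2 : ℕ) : ℤ) p
      have h2 := absorb (((b' + 2 : ℕ) : ℤ) - 1) ((p : ℤ) - 1)
      rw [show (((b' + 2 : ℕ) : ℤ) - 1 - 1) = ((b' : ℕ) : ℤ) by push_cast; ring] at h2
      rw [show ((p : ℤ) - 1 - 1) = (p : ℤ) - 2 by ring] at h2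
      push_cast at h1 h2 ⊢
      nlinarith [h1, h2]
    calc ∑ pq ∈ Finset.HasAntidiagonal.antidiagonal N, (pq.1 : ℚ) * ((pq.1 : ℚ) - 1) * ch (b' + 2 : ℕ) pq.1 * ch C pq.2
        = ((b' + 2 : ℕ) : ℚ) * (((b' + 2 : ℕ) : ℚ) - 1)
            * ∑ pq ∈ Finset.HasAntidiagonal.antidiagonal N, ch b' ((pq.1 : ℤ) - 2) * ch C (pq.2 : ℤ) := by
          rw [Finset.mul_sum]
          apply Finset.sum_congr rfl
          intro pq _
          have := habs pq.1
          push_cast at this ⊢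
          linear_combination this * ch (C : ℤ) (pq.2 : ℤ)
      _ = ((b' + 2 : ℕ) : ℚ) * (((b' + 2 : ℕ) : ℚ) - 1) * ch (((b' + 2 : ℕ) : ℤ) + C - 2) ((N : ℤ) - 2) := by
          rw [show (((b' + 2 : ℕ) : ℤ) + C - 2) = ((b' : ℕ) : ℤ) + C by push_cast; ring, hSV]

lemma Vc (b C N : ℕ) :
    ∑ pq ∈ Finset.HasAntidiagonal.antidiagonal N, (pq.1 : ℚ) ^ 2 * ch b pq.1 * ch C pq.2
      = (b : ℚ) * ch ((b : ℤ) + C - 1) ((N : ℤ) - 1)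
        + (b : ℚ) * ((b : ℚ) - 1) * ch ((b : ℤ) + C - 2) ((N : ℤ) - 2) := by
  have h1 := Vb b C N
  have h2 := Vc2 b C N
  calc ∑ pq ∈ Finset.HasAntidiagonal.antidiagonal N, (pq.1 : ℚ) ^ 2 * ch b pq.1 * ch C pq.2
      = ∑ pq ∈ Finset.HasAntidiagonal.antidiagonal N, ((pq.1 : ℚ) * ch b pq.1 * ch C pq.2
          + (pq.1 : ℚ) * ((pq.1 : ℚ) - 1) * ch b pq.1 * ch C pq.2) := by
        apply Finset.sum_congr rfl; intro pq _; ring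
    _ = _ := by rw [Finset.sum_add_distrib, h1, h2]

lemma Vd (b C N : ℕ) (hC : 1 ≤ C) :
    ∑ pq ∈ Finset.HasAntidiagonal.antidiagonal N, ch b pq.1 * ch ((C : ℤ) - 1) ((pq.2 : ℤ) - 1)
      = ch ((b : ℤ) + C - 1) ((N : ℤ) - 1) := by
  obtain ⟨C', rfl⟩ : ∃ C', C = C' + 1 := ⟨C - 1, by omega⟩
  have hSV := SV b C' 0 1 N
  push_cast at hSV
  simp only [sub_zero] at hSV
  rw [show (((C' + 1 : ℕ) : ℤ) - 1) = ((C' : ℕ) : ℤ) by push_cast; ring,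
    show ((b : ℤ) + ((C' + 1 : ℕ) : ℕ) - 1) = (b : ℤ) + C' by push_cast; ring]
  exact hSV

lemma Ve (b C N : ℕ) (hC : 1 ≤ C) :
    ∑ pq ∈ Finset.HasAntidiagonal.antidiagonal N, (pq.1 : ℚ) * ch b pq.1 * ch ((C : ℤ) - 1) ((pq.2 : ℤ) - 1)
      = (b : ℚ) * ch ((b : ℤ) + C - 2) ((N : ℤ) - 2) := by
  obtain ⟨C', rfl⟩ : ∃ C', C = C' + 1 := ⟨C - 1, by omega⟩
  rw [show (((C' + 1 : ℕ) : ℤ) - 1) = ((C' : ℕ) : ℤ) by push_cast; ring]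
  rcases b with _ | b'
  · rw [Finset.sum_eq_zero]
    · simp
    · intro pq _
      rcases Nat.eq_zero_or_pos pq.1 with h | h
      · rw [h]; simp
      · rw [ch_gt (by exact_mod_cast h)]; ring
  · have hSV := SV b' C' 1 1 N
    push_cast at hSV
    calc ∑ pq ∈ Finset.HasAntidiagonal.antidiagonal N, (pq.1 : ℚ) * ch (b' + 1 : ℕ) pq.1 * ch C' ((pq.2 : ℤ) - 1)
        = ((b' + 1 : ℕ) : ℚ) * ∑ pq ∈ Finset.HasAntidiagonal.antidiagonal N, ch b' ((pq.1 : ℤ) - 1) * ch C' ((pq.2 : ℤ) - 1) := by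
          rw [Finset.mul_sum]
          apply Finset.sum_congr rfl
          intro pq _
          have habs := absorb ((b' + 1 : ℕ) : ℤ) pq.1
          rw [show ((b' + 1 : ℕ) : ℤ) - 1 = ((b' : ℕ) : ℤ) by push_cast; ring] at habs
          push_cast at habs ⊢
          linear_combination habs * ch (C' : ℤ) ((pq.2 : ℤ) - 1)
      _ = ((b' + 1 : ℕ) : ℚ) * ch (((b' + 1 : ℕ) : ℤ) + (C' + 1 : ℕ) - 2) ((N : ℤ) - 2) := by
          rw [show (((b' + 1 : ℕ) : ℤ) + ((C' + 1 : ℕ) : ℤ) - 2) = ((b' : ℕ) : ℤ) + C' by push_cast; ring]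
          rw [show ((N : ℤ) - 2) = (N : ℤ) - 1 - 1 by ring]
          exact congrArg _ hSV

lemma Vf (b C N : ℕ) (hC : 2 ≤ C) :
    ∑ pq ∈ Finset.HasAntidiagonal.antidiagonal N, ch b pq.1 * ch ((C : ℤ) - 2) ((pq.2 : ℤ) - 2)
      = ch ((b : ℤ) + C - 2) ((N : ℤ) - 2) := by
  obtain ⟨C', rfl⟩ : ∃ C', C = C' + 2 := ⟨C - 2, by omega⟩
  have hSV := SV b C' 0 2 N
  push_cast at hSV
  simp only [sub_zero] at hSV
  rw [show (((C' + 2 : ℕ) : ℤ) - 2) = ((C' : ℕ) : ℤ) by push_cast; ring,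
    show ((b : ℤ) + ((C' + 2 : ℕ) : ℤ) - 2) = (b : ℤ) + C' by push_cast; ring]
  rw [show ((N : ℤ) - 2) = (N : ℤ) - 0 - 2 by ring]
  exact hSV

lemma sum_xb_zero {m : ℕ} (b : Fin m → ℕ) (y : Fin m → ℚ) (h : ∑ i, b i = 0) :
    ∑ i, y i * (b i : ℚ) = 0 := by
  apply Finset.sum_eq_zero
  intro i _
  have : b i = 0 := by
    have := Finset.sum_eq_zero_iff.mp h i (Finset.mem_univ i)
    exact this
  rw [this]; norm_num

lemma sum_xb_one {m : ℕ} (b : Fin m → ℕ) (x : Fin m → ℚ) (h : ∑ i, b i = 1) :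
    (∑ i, x i * (b i : ℚ)) ^ 2 = ∑ i, x i ^ 2 * (b i : ℚ) := by
  obtain ⟨j, hj, hone⟩ : ∃ j ∈ Finset.univ, b j ≠ 0 := by
    by_contra hc
    push_neg at hc
    rw [Finset.sum_eq_zero (fun i hi => hc i hi)] at h
    omega
  have hbj : b j = 1 := by
    have h1 : b j ≤ ∑ i, b i := Finset.single_le_sum (fun i _ => Nat.zero_le _) hj
    omega
  have hrest : ∀ i, i ≠ j → b i = 0 := by
    intro i hi
    have := Finset.add_sum_erase Finset.univ b hj
    have h2 : ∑ k ∈ Finset.univ.erase j, b k = 0 := by omega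
    have := Finset.sum_eq_zero_iff.mp h2 i (Finset.mem_erase.mpr ⟨hi, Finset.mem_univ i⟩)
    exact this
  rw [Finset.sum_eq_single_of_mem j hj (fun i _ hi => by rw [hrest i hi]; norm_num),
    Finset.sum_eq_single_of_mem j hj (fun i _ hi => by rw [hrest i hi]; norm_num), hbj]
  push_cast; ring

lemma sum_aT_succ {M : Type*} [AddCommMonoid M] (m n : ℕ) (f : (Fin (m + 1) → ℕ) → M) :
    ∑ k ∈ Finset.Nat.antidiagonalTuple (m + 1) n, f k
      = ∑ pq ∈ Finset.HasAntidiagonal.antidiagonal n, ∑ t ∈ Finset.Nat.antidiagonalTuple m pq.2, f (Fin.cons pq.1 t) := by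
  have step2 : ∑ p ∈ (Finset.HasAntidiagonal.antidiagonal n).sigma (fun pq => Finset.Nat.antidiagonalTuple m pq.2),
      f (Fin.cons p.1.1 p.2) = ∑ pq ∈ Finset.HasAntidiagonal.antidiagonal n, ∑ t ∈ Finset.Nat.antidiagonalTuple m pq.2,
      f (Fin.cons pq.1 t) := Finset.sum_sigma _ _ _
  rw [← step2]
  apply Finset.sum_nbij' (i := fun k => (⟨(k 0, ∑ i, k (Fin.succ i)), Fin.tail k⟩ :
      (pq : ℕ × ℕ) × (Fin m → ℕ))) (j := fun p => Fin.cons p.1.1 p.2)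
  · intro k hk
    rw [Finset.Nat.mem_antidiagonalTuple] at hk
    rw [Finset.mem_sigma, Finset.HasAntidiagonal.mem_antidiagonal, Finset.Nat.mem_antidiagonalTuple]
    constructor
    · rw [← hk, Fin.sum_univ_succ]
    · rfl
  · intro p hp
    rw [Finset.mem_sigma, Finset.HasAntidiagonal.mem_antidiagonal, Finset.Nat.mem_antidiagonalTuple] at hp
    rw [Finset.Nat.mem_antidiagonalTuple, Fin.sum_univ_succ]
    simp only [Fin.cons_zero, Fin.cons_succ]
    rw [hp.2, hp.1]
  · intro k _
    exact Fin.cons_self_tail k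
  · intro p hp
    rw [Finset.mem_sigma, Finset.HasAntidiagonal.mem_antidiagonal, Finset.Nat.mem_antidiagonalTuple] at hp
    refine Sigma.ext ?_ (heq_of_eq ?_)
    · simp only [Fin.cons_zero, Fin.cons_succ]
      exact Prod.ext rfl hp.2
    · ext i; simp [Fin.tail]
  · intro k _
    rw [Fin.cons_self_tail]

lemma master : ∀ (m : ℕ) (b : Fin m → ℕ) (x : Fin m → ℚ) (N : ℕ),
    ((∑ k ∈ Finset.Nat.antidiagonalTuple m N, ∏ i, ch (b i) (k i)) = ch ((∑ i, b i : ℕ)) N)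
    ∧ ((∑ k ∈ Finset.Nat.antidiagonalTuple m N, (∏ i, ch (b i) (k i)) * (∑ i, x i * (k i : ℚ)))
        = (∑ i, x i * (b i : ℚ)) * ch (((∑ i, b i : ℕ) : ℤ) - 1) ((N : ℤ) - 1))
    ∧ ((∑ k ∈ Finset.Nat.antidiagonalTuple m N, (∏ i, ch (b i) (k i)) * (∑ i, x i * (k i : ℚ)) ^ 2)
        = (∑ i, x i ^ 2 * (b i : ℚ)) * ch (((∑ i, b i : ℕ) : ℤ) - 1) ((N : ℤ) - 1)
          + ((∑ i, x i * (b i : ℚ)) ^ 2 - ∑ i, x i ^ 2 * (b i : ℚ))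
            * ch (((∑ i, b i : ℕ) : ℤ) - 2) ((N : ℤ) - 2)) := by
  intro m
  induction m with
  | zero =>
    intro b x N
    rcases N with _ | N'
    · refine ⟨by norm_num [ch], by norm_num [ch, ch_neg], by norm_num [ch, ch_neg]⟩
    · have hz : ch 0 ((N' : ℤ) + 1) = 0 := ch_gt (by positivity)
      refine ⟨?_, ?_, ?_⟩ <;>
        simp [Finset.Nat.antidiagonalTuple_zero_succ, hz]
  | succ m IH =>
    intro b x N
    have IH0 : ∀ q, (∑ k ∈ Finset.Nat.antidiagonalTuple m q, ∏ i, ch (b (Fin.succ i)) (k i))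
        = ch ((∑ i, b (Fin.succ i) : ℕ)) q :=
      fun q => (IH (fun i => b (Fin.succ i)) (fun i => x (Fin.succ i)) q).1
    have IH1 : ∀ q, (∑ k ∈ Finset.Nat.antidiagonalTuple m q,
          (∏ i, ch (b (Fin.succ i)) (k i)) * (∑ i, x (Fin.succ i) * (k i : ℚ)))
        = (∑ i, x (Fin.succ i) * (b (Fin.succ i) : ℚ))
            * ch (((∑ i, b (Fin.succ i) : ℕ) : ℤ) - 1) ((q : ℤ) - 1) :=
      fun q => (IH (fun i => b (Fin.succ i)) (fun i => x (Fin.succ i)) q).2.1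
    have IH2 : ∀ q, (∑ k ∈ Finset.Nat.antidiagonalTuple m q,
          (∏ i, ch (b (Fin.succ i)) (k i)) * (∑ i, x (Fin.succ i) * (k i : ℚ)) ^ 2)
        = (∑ i, x (Fin.succ i) ^ 2 * (b (Fin.succ i) : ℚ))
            * ch (((∑ i, b (Fin.succ i) : ℕ) : ℤ) - 1) ((q : ℤ) - 1)
          + ((∑ i, x (Fin.succ i) * (b (Fin.succ i) : ℚ)) ^ 2
              - ∑ i, x (Fin.succ i) ^ 2 * (b (Fin.succ i) : ℚ))
            * ch (((∑ i, b (Fin.succ i) : ℕ) : ℤ) - 2) ((q : ℤ) - 2) :=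
      fun q => (IH (fun i => b (Fin.succ i)) (fun i => x (Fin.succ i)) q).2.2
    set b0 := b 0 with hb0
    set B' := (∑ i, b (Fin.succ i)) with hB'
    set x0 := x 0 with hx0
    set X1 := (∑ i, x (Fin.succ i) * (b (Fin.succ i) : ℚ)) with hX1
    set X2 := (∑ i, x (Fin.succ i) ^ 2 * (b (Fin.succ i) : ℚ)) with hX2
    have hsumb : (∑ i, b i) = b0 + B' := Fin.sum_univ_succ b
    have hsumx1 : (∑ i, x i * (b i : ℚ)) = x0 * b0 + X1 :=
      Fin.sum_univ_succ (fun i => x i * (b i : ℚ))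
    have hsumx2 : (∑ i, x i ^ 2 * (b i : ℚ)) = x0 ^ 2 * b0 + X2 :=
      Fin.sum_univ_succ (fun i => x i ^ 2 * (b i : ℚ))
    have hX1zero : B' = 0 → X1 = 0 := fun h => sum_xb_zero _ _ h
    have hX2zero : B' = 0 → X2 = 0 := fun h => sum_xb_zero _ (fun i => x (Fin.succ i) ^ 2) h
    have hX1sq : B' = 1 → X1 ^ 2 = X2 := fun h => sum_xb_one _ _ h
    -- conditional outer sums
    have hTa : ∀ Y : ℚ, (B' = 0 → Y = 0) →
        Y * (∑ pq ∈ Finset.HasAntidiagonal.antidiagonal N, ch b0 pq.1 * ch ((B' : ℤ) - 1) ((pq.2 : ℤ) - 1))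
          = Y * ch ((b0 : ℤ) + B' - 1) ((N : ℤ) - 1) := by
      intro Y hY
      rcases Nat.eq_zero_or_pos B' with h | h
      · rw [hY h]; ring
      · rw [Vd b0 B' N h]
    have hE : ∀ Y : ℚ, (B' = 0 → Y = 0) →
        Y * (∑ pq ∈ Finset.HasAntidiagonal.antidiagonal N, (pq.1 : ℚ) * ch b0 pq.1 * ch ((B' : ℤ) - 1) ((pq.2 : ℤ) - 1))
          = Y * ((b0 : ℚ) * ch ((b0 : ℤ) + B' - 2) ((N : ℤ) - 2)) := by
      intro Y hY
      rcases Nat.eq_zero_or_pos B' with h | h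
      · rw [hY h]; ring
      · rw [Ve b0 B' N h]
    have hF : (X1 ^ 2 - X2) * (∑ pq ∈ Finset.HasAntidiagonal.antidiagonal N, ch b0 pq.1 * ch ((B' : ℤ) - 2) ((pq.2 : ℤ) - 2))
        = (X1 ^ 2 - X2) * ch ((b0 : ℤ) + B' - 2) ((N : ℤ) - 2) := by
      by_cases h : 2 ≤ B'
      · rw [Vf b0 B' N h]
      · have hc : X1 ^ 2 - X2 = 0 := by
          interval_cases B'
          · rw [hX1zero rfl, hX2zero rfl]; ring
          · rw [hX1sq rfl]; ring
        rw [hc]; ring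
    -- inner sum evaluations
    have inner0 : ∀ p q : ℕ, (∑ t ∈ Finset.Nat.antidiagonalTuple m q,
          ∏ i, ch (b i) ((Fin.cons p t : Fin (m+1) → ℕ) i))
        = ch b0 p * ch B' q := by
      intro p q
      rw [← IH0 q, Finset.mul_sum]
      apply Finset.sum_congr rfl
      intro t _
      rw [Fin.prod_univ_succ]
      simp only [Fin.cons_zero, Fin.cons_succ]
      rfl
    have inner1 : ∀ p q : ℕ, (∑ t ∈ Finset.Nat.antidiagonalTuple m q,
          (∏ i, ch (b i) ((Fin.cons p t : Fin (m+1) → ℕ) i)) * (∑ i, x i * ((Fin.cons p t : Fin (m+1) → ℕ) i : ℚ)))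
        = ch b0 p * (x0 * p * ch B' q + X1 * ch ((B' : ℤ) - 1) ((q : ℤ) - 1)) := by
      intro p q
      calc (∑ t ∈ Finset.Nat.antidiagonalTuple m q,
            (∏ i, ch (b i) ((Fin.cons p t : Fin (m+1) → ℕ) i)) * (∑ i, x i * ((Fin.cons p t : Fin (m+1) → ℕ) i : ℚ)))
          = ∑ t ∈ Finset.Nat.antidiagonalTuple m q, ch b0 p *
              (x0 * p * (∏ i, ch (b (Fin.succ i)) (t i))
                + (∏ i, ch (b (Fin.succ i)) (t i)) * (∑ i, x (Fin.succ i) * (t i : ℚ))) := by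
            apply Finset.sum_congr rfl
            intro t _
            rw [Fin.prod_univ_succ, Fin.sum_univ_succ]
            simp only [Fin.cons_zero, Fin.cons_succ]
            ring
        _ = ch b0 p * (x0 * p * (∑ t ∈ Finset.Nat.antidiagonalTuple m q, ∏ i, ch (b (Fin.succ i)) (t i))
              + ∑ t ∈ Finset.Nat.antidiagonalTuple m q,
                  (∏ i, ch (b (Fin.succ i)) (t i)) * (∑ i, x (Fin.succ i) * (t i : ℚ))) := by
            rw [← Finset.mul_sum, Finset.sum_add_distrib, ← Finset.mul_sum]
        _ = ch b0 p * (x0 * p * ch B' q + X1 * ch ((B' : ℤ) - 1) ((q : ℤ) - 1)) := by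
            rw [IH0, IH1]
    have inner2 : ∀ p q : ℕ, (∑ t ∈ Finset.Nat.antidiagonalTuple m q,
          (∏ i, ch (b i) ((Fin.cons p t : Fin (m+1) → ℕ) i)) * (∑ i, x i * ((Fin.cons p t : Fin (m+1) → ℕ) i : ℚ)) ^ 2)
        = ch b0 p * ((x0 * p) ^ 2 * ch B' q
            + 2 * (x0 * p) * (X1 * ch ((B' : ℤ) - 1) ((q : ℤ) - 1))
            + (X2 * ch ((B' : ℤ) - 1) ((q : ℤ) - 1)
                + (X1 ^ 2 - X2) * ch ((B' : ℤ) - 2) ((q : ℤ) - 2))) := by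
      intro p q
      calc (∑ t ∈ Finset.Nat.antidiagonalTuple m q,
            (∏ i, ch (b i) ((Fin.cons p t : Fin (m+1) → ℕ) i)) * (∑ i, x i * ((Fin.cons p t : Fin (m+1) → ℕ) i : ℚ)) ^ 2)
          = ∑ t ∈ Finset.Nat.antidiagonalTuple m q, ch b0 p *
              ((x0 * p) ^ 2 * (∏ i, ch (b (Fin.succ i)) (t i))
                + 2 * (x0 * p) * ((∏ i, ch (b (Fin.succ i)) (t i)) * (∑ i, x (Fin.succ i) * (t i : ℚ)))
                + (∏ i, ch (b (Fin.succ i)) (t i)) * (∑ i, x (Fin.succ i) * (t i : ℚ)) ^ 2) := by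
            apply Finset.sum_congr rfl
            intro t _
            rw [Fin.prod_univ_succ, Fin.sum_univ_succ]
            simp only [Fin.cons_zero, Fin.cons_succ]
            ring
        _ = ch b0 p * ((x0 * p) ^ 2 * (∑ t ∈ Finset.Nat.antidiagonalTuple m q, ∏ i, ch (b (Fin.succ i)) (t i))
              + 2 * (x0 * p) * (∑ t ∈ Finset.Nat.antidiagonalTuple m q,
                  (∏ i, ch (b (Fin.succ i)) (t i)) * (∑ i, x (Fin.succ i) * (t i : ℚ)))
              + ∑ t ∈ Finset.Nat.antidiagonalTuple m q,
                  (∏ i, ch (b (Fin.succ i)) (t i)) * (∑ i, x (Fin.succ i) * (t i : ℚ)) ^ 2) := by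
            rw [← Finset.mul_sum, Finset.sum_add_distrib, Finset.sum_add_distrib,
              ← Finset.mul_sum, ← Finset.mul_sum]
        _ = _ := by rw [IH0, IH1, IH2]
    refine ⟨?_, ?_, ?_⟩
    · rw [sum_aT_succ m N (fun k => ∏ i, ch (b i) (k i)),
        Finset.sum_congr rfl (fun pq _ => inner0 pq.1 pq.2), Va, hsumb]
    · rw [sum_aT_succ m N (fun k => (∏ i, ch (b i) (k i)) * (∑ i, x i * (k i : ℚ))),
        Finset.sum_congr rfl (fun pq _ => inner1 pq.1 pq.2)]
      have expand : ∑ pq ∈ Finset.HasAntidiagonal.antidiagonal N,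
            ch b0 pq.1 * (x0 * pq.1 * ch B' pq.2 + X1 * ch ((B' : ℤ) - 1) ((pq.2 : ℤ) - 1))
          = x0 * (∑ pq ∈ Finset.HasAntidiagonal.antidiagonal N, (pq.1 : ℚ) * ch b0 pq.1 * ch B' pq.2)
            + X1 * (∑ pq ∈ Finset.HasAntidiagonal.antidiagonal N, ch b0 pq.1 * ch ((B' : ℤ) - 1) ((pq.2 : ℤ) - 1)) := by
        rw [Finset.mul_sum, Finset.mul_sum, ← Finset.sum_add_distrib]
        apply Finset.sum_congr rfl
        intro pq _
        ring
      rw [expand, Vb, hTa X1 hX1zero, hsumx1, hsumb]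
      have hc : ((b0 + B' : ℕ) : ℤ) - 1 = (b0 : ℤ) + B' - 1 := by push_cast; ring
      rw [hc]
      ring
    · rw [sum_aT_succ m N (fun k => (∏ i, ch (b i) (k i)) * (∑ i, x i * (k i : ℚ)) ^ 2),
        Finset.sum_congr rfl (fun pq _ => inner2 pq.1 pq.2)]
      have expand : ∑ pq ∈ Finset.HasAntidiagonal.antidiagonal N,
            ch b0 pq.1 * ((x0 * pq.1) ^ 2 * ch B' pq.2
              + 2 * (x0 * pq.1) * (X1 * ch ((B' : ℤ) - 1) ((pq.2 : ℤ) - 1))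
              + (X2 * ch ((B' : ℤ) - 1) ((pq.2 : ℤ) - 1)
                  + (X1 ^ 2 - X2) * ch ((B' : ℤ) - 2) ((pq.2 : ℤ) - 2)))
          = x0 ^ 2 * (∑ pq ∈ Finset.HasAntidiagonal.antidiagonal N, (pq.1 : ℚ) ^ 2 * ch b0 pq.1 * ch B' pq.2)
            + (2 * x0 * X1) * (∑ pq ∈ Finset.HasAntidiagonal.antidiagonal N, (pq.1 : ℚ) * ch b0 pq.1 * ch ((B' : ℤ) - 1) ((pq.2 : ℤ) - 1))
            + X2 * (∑ pq ∈ Finset.HasAntidiagonal.antidiagonal N, ch b0 pq.1 * ch ((B' : ℤ) - 1) ((pq.2 : ℤ) - 1))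
            + (X1 ^ 2 - X2) * (∑ pq ∈ Finset.HasAntidiagonal.antidiagonal N, ch b0 pq.1 * ch ((B' : ℤ) - 2) ((pq.2 : ℤ) - 2)) := by
        calc ∑ pq ∈ Finset.HasAntidiagonal.antidiagonal N,
              ch b0 pq.1 * ((x0 * pq.1) ^ 2 * ch B' pq.2
                + 2 * (x0 * pq.1) * (X1 * ch ((B' : ℤ) - 1) ((pq.2 : ℤ) - 1))
                + (X2 * ch ((B' : ℤ) - 1) ((pq.2 : ℤ) - 1)
                    + (X1 ^ 2 - X2) * ch ((B' : ℤ) - 2) ((pq.2 : ℤ) - 2)))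
            = ∑ pq ∈ Finset.HasAntidiagonal.antidiagonal N,
              (x0 ^ 2 * ((pq.1 : ℚ) ^ 2 * ch b0 pq.1 * ch B' pq.2)
                + (2 * x0 * X1) * ((pq.1 : ℚ) * ch b0 pq.1 * ch ((B' : ℤ) - 1) ((pq.2 : ℤ) - 1))
                + X2 * (ch b0 pq.1 * ch ((B' : ℤ) - 1) ((pq.2 : ℤ) - 1))
                + (X1 ^ 2 - X2) * (ch b0 pq.1 * ch ((B' : ℤ) - 2) ((pq.2 : ℤ) - 2))) := by
              apply Finset.sum_congr rfl
              intro pq _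
              ring
          _ = _ := by
              rw [Finset.sum_add_distrib, Finset.sum_add_distrib, Finset.sum_add_distrib,
                ← Finset.mul_sum, ← Finset.mul_sum, ← Finset.mul_sum, ← Finset.mul_sum]
      have hE2 : (2 * x0 * X1) * (∑ pq ∈ Finset.HasAntidiagonal.antidiagonal N, (pq.1 : ℚ) * ch b0 pq.1 * ch ((B' : ℤ) - 1) ((pq.2 : ℤ) - 1))
          = (2 * x0 * X1) * ((b0 : ℚ) * ch ((b0 : ℤ) + B' - 2) ((N : ℤ) - 2)) := by
        rcases Nat.eq_zero_or_pos B' with h | h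
        · rw [hX1zero h]; ring
        · rw [Ve b0 B' N h]
      rw [expand, Vc, hE2, hTa X2 hX2zero, hF, hsumx1, hsumx2, hsumb]
      have hc1 : ((b0 + B' : ℕ) : ℤ) - 1 = (b0 : ℤ) + B' - 1 := by push_cast; ring
      have hc2 : ((b0 + B' : ℕ) : ℤ) - 2 = (b0 : ℤ) + B' - 2 := by push_cast; ring
      rw [hc1, hc2]
      ring

lemma chch (ai ci k : ℕ) (h : ci ≤ ai) :
    ch ai k * ch k ci = ch ai ci * ch ((ai - ci : ℕ)) ((k : ℤ) - ci) := by
  by_cases h1 : k < ci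
  · rw [ch_gt (by exact_mod_cast h1 : (k : ℤ) < ci),
      ch_neg (show (k : ℤ) - ci < 0 by omega)]
    ring
  · by_cases h2 : ai < k
    · rw [ch_gt (by exact_mod_cast h2 : (ai : ℤ) < k),
        ch_gt (show ((ai - ci : ℕ) : ℤ) < (k : ℤ) - ci by
          rw [Nat.cast_sub h]; push_cast; omega)]
      ring
    · push_neg at h1 h2
      rw [show (k : ℤ) - ci = ((k - ci : ℕ) : ℤ) by rw [Nat.cast_sub h1],
        ch_natCast, ch_natCast, ch_natCast, ch_natCast]
      exact_mod_cast congrArg (Nat.cast : ℕ → ℚ) (Nat.choose_mul (n := ai) h1)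

lemma sum_aT_shift (m N : ℕ) (c : Fin m → ℕ) (f : (Fin m → ℕ) → ℚ)
    (hf : ∀ k, (∃ i, k i < c i) → f k = 0) :
    ∑ k ∈ Finset.Nat.antidiagonalTuple m (N + ∑ i, c i), f k
      = ∑ k ∈ Finset.Nat.antidiagonalTuple m N, f (fun i => k i + c i) := by
  classical
  set e : (Fin m → ℕ) ↪ (Fin m → ℕ) :=
    ⟨fun k i => k i + c i, by
      intro p q h
      funext i
      have := congrFun h i
      simpa using this⟩ with he
  have hsub : (Finset.Nat.antidiagonalTuple m N).map e
      ⊆ Finset.Nat.antidiagonalTuple m (N + ∑ i, c i) := by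
    intro k hk
    simp only [Finset.mem_map, Finset.Nat.mem_antidiagonalTuple, he,
      Function.Embedding.coeFn_mk] at hk ⊢
    obtain ⟨t, ht, rfl⟩ := hk
    show ∑ i, (t i + c i) = N + ∑ i, c i
    rw [Finset.sum_add_distrib, ht]
  rw [← Finset.sum_subset hsub]
  · rw [Finset.sum_map]
    rfl
  · intro k hk hnot
    simp only [Finset.mem_map, Finset.Nat.mem_antidiagonalTuple, he,
      Function.Embedding.coeFn_mk] at hk hnot
    apply hf
    by_contra hcon
    push_neg at hcon
    refine hnot ⟨fun i => k i - c i, ?_, ?_⟩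
    · have h5 : ∑ i, ((fun i => k i - c i) i + c i) = ∑ i, k i := by
        apply Finset.sum_congr rfl
        intro i _
        simp only []
        have := hcon i
        omega
      rw [Finset.sum_add_distrib] at h5
      show (∑ i, (k i - c i)) = N
      omega
    · funext i
      show k i - c i + c i = k i
      have := hcon i
      omega

theorem stmt3 (m n : ℕ) (hm : 1 ≤ m) (a c : Fin m → ℕ) (x : Fin m → ℚ) :
    (∑ k ∈ Finset.Nat.antidiagonalTuple m n, (∏ i, ch (a i) (k i) * ch (k i) (c i)) * (∑ i, x i * (k i : ℚ)) ^ 2)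
        * (((∑ i, (a i : ℚ)) - (∑ i, (c i : ℚ))) * ((∑ i, (a i : ℚ)) - (∑ i, (c i : ℚ)) - 1))
      = ch ((∑ i, (a i : ℤ)) - ∑ i, (c i : ℤ)) ((n : ℤ) - ∑ i, (c i : ℤ)) * (∏ i, ch (a i) (c i))
        * (((n : ℚ) - (∑ i, (c i : ℚ))) * (((n : ℚ) - (∑ i, (c i : ℚ)) - 1) * (∑ i, x i * (a i : ℚ)) ^ 2
              + ((∑ i, (a i : ℚ)) - (n : ℚ)) * ((∑ i, x i ^ 2 * (a i : ℚ)) - (∑ i, x i ^ 2 * (c i : ℚ)) + 2 * (∑ i, x i * (a i : ℚ)) * (∑ i, x i * (c i : ℚ))))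
           + ((∑ i, (a i : ℚ)) - (n : ℚ)) * ((∑ i, (a i : ℚ)) - (n : ℚ) - 1) * (∑ i, x i * (c i : ℚ)) ^ 2) := by
  classical
  by_cases hac : ∀ i, c i ≤ a i
  · set b : Fin m → ℕ := fun i => a i - c i with hbdef
    have hbz : ∀ i, ((b i : ℕ) : ℤ) = (a i : ℤ) - c i := by
      intro i
      simp only [hbdef]
      have := hac i
      omega
    have hbq : ∀ i, ((b i : ℕ) : ℚ) = (a i : ℚ) - c i := by
      intro i
      exact_mod_cast congrArg (Int.cast : ℤ → ℚ) (hbz i)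
    set B : ℕ := ∑ i, b i with hBdef
    have hBz : ((B : ℕ) : ℤ) = (∑ i, (a i : ℤ)) - ∑ i, (c i : ℤ) := by
      rw [hBdef, Nat.cast_sum, Finset.sum_congr rfl (fun i _ => hbz i), Finset.sum_sub_distrib]
    have hBq : ((B : ℕ) : ℚ) = (∑ i, (a i : ℚ)) - ∑ i, (c i : ℚ) := by
      exact_mod_cast congrArg (Int.cast : ℤ → ℚ) hBz
    have hprod : ∀ k : Fin m → ℕ, (∏ i, ch (a i) (k i) * ch (k i) (c i))
        = (∏ i, ch (a i) (c i)) * ∏ i, ch (b i) ((k i : ℤ) - c i) := by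
      intro k
      rw [← Finset.prod_mul_distrib]
      exact Finset.prod_congr rfl (fun i _ => chch _ _ _ (hac i))
    have hLHS : (∑ k ∈ Finset.Nat.antidiagonalTuple m n,
          (∏ i, ch (a i) (k i) * ch (k i) (c i)) * (∑ i, x i * (k i : ℚ)) ^ 2)
        = (∏ i, ch (a i) (c i)) * ∑ k ∈ Finset.Nat.antidiagonalTuple m n,
            (∏ i, ch (b i) ((k i : ℤ) - c i)) * (∑ i, x i * (k i : ℚ)) ^ 2 := by
      rw [Finset.mul_sum]
      apply Finset.sum_congr rfl
      intro k _
      rw [hprod k]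
      ring
    by_cases hn : n < ∑ i, c i
    · have he0 : ch ((∑ i, (a i : ℤ)) - ∑ i, (c i : ℤ)) ((n : ℤ) - ∑ i, (c i : ℤ)) = 0 := by
        apply ch_neg
        have hcz : (∑ i, (c i : ℤ)) = ((∑ i, c i : ℕ) : ℤ) := by push_cast; rfl
        omega
      have hz : (∑ k ∈ Finset.Nat.antidiagonalTuple m n,
            (∏ i, ch (b i) ((k i : ℤ) - c i)) * (∑ i, x i * (k i : ℚ)) ^ 2) = 0 := by
        apply Finset.sum_eq_zero
        intro k hk
        rw [Finset.Nat.mem_antidiagonalTuple] at hk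
        have hex : ∃ i, k i < c i := by
          by_contra hcon
          push_neg at hcon
          have := Finset.sum_le_sum (fun i (_ : i ∈ Finset.univ) => hcon i)
          omega
        obtain ⟨i1, hi1⟩ := hex
        rw [Finset.prod_eq_zero (Finset.mem_univ i1) (ch_neg (by omega : (k i1 : ℤ) - c i1 < 0))]
        ring
      rw [hLHS, hz, he0]
      ring
    · obtain ⟨N, rfl⟩ : ∃ N, n = N + ∑ i, c i := ⟨n - ∑ i, c i, by omega⟩
      have hshift := sum_aT_shift m N c
        (fun k => (∏ i, ch (b i) ((k i : ℤ) - c i)) * (∑ i, x i * (k i : ℚ)) ^ 2)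
        (by
          rintro k ⟨i, hi⟩
          show (∏ i, ch (b i) ((k i : ℤ) - c i)) * (∑ i, x i * (k i : ℚ)) ^ 2 = 0
          rw [Finset.prod_eq_zero (Finset.mem_univ i) (ch_neg (by omega : (k i : ℤ) - c i < 0))]
          ring)
      set t := ∑ i, x i * (c i : ℚ) with htdef
      have hsimp : ∀ k' : Fin m → ℕ,
          (∏ i, ch (b i) ((((fun i => k' i + c i) i : ℕ) : ℤ) - c i))
              * (∑ i, x i * (((fun i => k' i + c i) i : ℕ) : ℚ)) ^ 2
            = (∏ i, ch (b i) (k' i)) * ((∑ i, x i * (k' i : ℚ)) + t) ^ 2 := by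
        intro k'
        congr 1
        · apply Finset.prod_congr rfl
          intro i _
          congr 1
          push_cast
          ring
        · congr 1
          rw [htdef, ← Finset.sum_add_distrib]
          apply Finset.sum_congr rfl
          intro i _
          push_cast
          ring
      obtain ⟨M0, M1, M2⟩ := master m b x N
      set e0 := ch ((B : ℕ) : ℤ) ((N : ℕ) : ℤ) with he0def
      set e1 := ch (((B : ℕ) : ℤ) - 1) (((N : ℕ) : ℤ) - 1) with he1def
      set e2 := ch (((B : ℕ) : ℤ) - 2) (((N : ℕ) : ℤ) - 2) with he2def
      set X1 := ∑ i, x i * (b i : ℚ) with hX1def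
      set X2 := ∑ i, x i ^ 2 * (b i : ℚ) with hX2def
      have hS : (∑ k' ∈ Finset.Nat.antidiagonalTuple m N,
            (∏ i, ch (b i) (k' i)) * ((∑ i, x i * (k' i : ℚ)) + t) ^ 2)
          = X2 * e1 + (X1 ^ 2 - X2) * e2 + 2 * t * (X1 * e1) + t ^ 2 * e0 := by
        calc (∑ k' ∈ Finset.Nat.antidiagonalTuple m N,
              (∏ i, ch (b i) (k' i)) * ((∑ i, x i * (k' i : ℚ)) + t) ^ 2)
            = ∑ k' ∈ Finset.Nat.antidiagonalTuple m N,
                ((∏ i, ch (b i) (k' i)) * (∑ i, x i * (k' i : ℚ)) ^ 2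
                  + 2 * t * ((∏ i, ch (b i) (k' i)) * (∑ i, x i * (k' i : ℚ)))
                  + t ^ 2 * (∏ i, ch (b i) (k' i))) := by
              apply Finset.sum_congr rfl
              intro k' _
              ring
          _ = X2 * e1 + (X1 ^ 2 - X2) * e2 + 2 * t * (X1 * e1) + t ^ 2 * e0 := by
              rw [Finset.sum_add_distrib, Finset.sum_add_distrib, M2, ← Finset.mul_sum, M1,
                ← Finset.mul_sum, M0]
      -- the two absorption relations
      have rel1 : ((N : ℚ)) * e0 = ((B : ℚ)) * e1 := by
        have := absorb ((B : ℕ) : ℤ) ((N : ℕ) : ℤ)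
        rw [he0def, he1def]
        push_cast at this ⊢
        exact this
      have rel2 : ((N : ℚ) - 1) * e1 = ((B : ℚ) - 1) * e2 := by
        have := absorb (((B : ℕ) : ℤ) - 1) (((N : ℕ) : ℤ) - 1)
        rw [show (((B : ℕ) : ℤ) - 1 - 1) = ((B : ℕ) : ℤ) - 2 by ring,
          show (((N : ℕ) : ℤ) - 1 - 1) = ((N : ℕ) : ℤ) - 2 by ring] at this
        rw [he1def, he2def]
        push_cast at this ⊢
        exact this
      have rel3 : ((B : ℚ)) * ((B : ℚ) - 1) * e2 = (N : ℚ) * ((N : ℚ) - 1) * e0 := by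
        linear_combination (-(B : ℚ)) * rel2 - ((N : ℚ) - 1) * rel1
      -- cast facts for the RHS
      have he0eq : ch ((∑ i, (a i : ℤ)) - ∑ i, (c i : ℤ)) (((N + ∑ i, c i : ℕ) : ℤ) - ∑ i, (c i : ℤ)) = e0 := by
        rw [he0def, ← hBz]
        congr 1
        push_cast
        ring
      have hA0 : (∑ i, (a i : ℚ)) = (B : ℚ) + ∑ i, (c i : ℚ) := by rw [hBq]; ring
      have hnq : ((N + ∑ i, c i : ℕ) : ℚ) = (N : ℚ) + ∑ i, (c i : ℚ) := by push_cast; ring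
      have hA1 : (∑ i, x i * (a i : ℚ)) = X1 + t := by
        rw [hX1def, htdef, ← Finset.sum_add_distrib]
        apply Finset.sum_congr rfl
        intro i _
        rw [hbq i]
        ring
      have hA2 : (∑ i, x i ^ 2 * (a i : ℚ)) = X2 + ∑ i, x i ^ 2 * (c i : ℚ) := by
        rw [hX2def, ← Finset.sum_add_distrib]
        apply Finset.sum_congr rfl
        intro i _
        rw [hbq i]
        ring
      rw [hLHS, hshift, Finset.sum_congr rfl (fun k' _ => hsimp k'), hS, he0eq, hA0, hnq, hA1, hA2]
      linear_combination (-(∏ i, ch (a i) (c i))) * (X2 + 2 * t * X1) * ((B : ℚ) - 1) * rel1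
        + (∏ i, ch (a i) (c i)) * (X1 ^ 2 - X2) * rel3
  · push_neg at hac
    obtain ⟨i0, hi0⟩ := hac
    have hP : (∏ i, ch (a i) (c i)) = 0 :=
      Finset.prod_eq_zero (Finset.mem_univ i0) (ch_gt (by exact_mod_cast hi0))
    have hL : (∑ k ∈ Finset.Nat.antidiagonalTuple m n,
          (∏ i, ch (a i) (k i) * ch (k i) (c i)) * (∑ i, x i * (k i : ℚ)) ^ 2) = 0 := by
      apply Finset.sum_eq_zero
      intro k _
      have hzero : ch (a i0) (k i0) * ch (k i0) (c i0) = 0 := by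
        by_cases h : k i0 ≤ a i0
        · rw [ch_gt (by exact_mod_cast by omega : (k i0 : ℤ) < c i0)]
          ring
        · rw [ch_gt (by exact_mod_cast by omega : (a i0 : ℤ) < k i0)]
          ring
      rw [Finset.prod_eq_zero (Finset.mem_univ i0) hzero]
      ring
    rw [hL, hP]
    ring
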